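/- Let φ : Y → NCP be the unique isomorphism of Catalan pairs from planar binary trees (with Catalan map (σ, τ) ↦ tree with left subtree σ and right subtree τ) to noncrossing partitions (with Catalan map (P, Q) ↦ P * (| ⊔̲ Q)). Then for all planar binary trees σ, τ: φ(σ / τ) = φ(σ) * φ(τ) and φ(σ \ τ) = φ(σ) ⊔̲ φ(τ), where σ / τ (over) grafts σ as the left child of the leftmost internal vertex of τ, and σ \ τ (under) grafts τ as the right child of the rightmost internal vertex of σ. -/

import Mathlib

/-- Planar binary trees. -/
inductive PBTree : Type
  | leaf : PBTree
  | node : PBTree → PBTree → PBTree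
deriving DecidableEq

namespace PBTree

/-- Number of internal vertices. -/
def size : PBTree → ℕ
  | .leaf => 0
  | .node l r => l.size + r.size + 1

end PBTree

/-- `r` is (the equivalence relation of) a noncrossing partition of `{0, …, n-1}`. -/
def IsNCPartition (n : ℕ) (r : ℕ → ℕ → Prop) : Prop :=
  (∀ i, r i i ↔ i < n) ∧
  (∀ i j, r i j → r j i) ∧
  (∀ i j k, r i j → r j k → r i k) ∧
  (∀ a b c d, a < b → b < c → c < d → r a c → r b d → r a b)

/-- The empty partition. -/
def emptyPart : ℕ → ℕ → Prop := fun _ _ => False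

/-- The partition `|` of a one-element set. -/
def onePart : ℕ → ℕ → Prop := fun i j => i = 0 ∧ j = 0

/-- Shift a partition by `m`. -/
def shiftPart (m : ℕ) (r : ℕ → ℕ → Prop) : ℕ → ℕ → Prop :=
  fun i j => m ≤ i ∧ m ≤ j ∧ r (i - m) (j - m)

/-- Concatenation `P * Q` of a partition `P` of `[m]` with a partition `Q`. -/
def concatPart (m : ℕ) (P Q : ℕ → ℕ → Prop) : ℕ → ℕ → Prop :=
  fun i j => P i j ∨ shiftPart m Q i j

/-- Right-merging `P ⊔̲ Q` of `P` of `[m]` with `Q` of `[n]`: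
merge the last block of `P` with the last block of `Q` in `P * Q`. -/
def rmergePart (m n : ℕ) (P Q : ℕ → ℕ → Prop) : ℕ → ℕ → Prop :=
  fun i j => concatPart m P Q i j ∨
    (P i (m - 1) ∧ shiftPart m Q j (m + n - 1)) ∨
    (shiftPart m Q i (m + n - 1) ∧ P j (m - 1))

/-- Left-merging `P ⊔̄ Q` of `P` of `[m]` with `Q`:
merge the first block of `P` with the first block of `Q` in `P * Q`. -/
def lmergePart (m : ℕ) (P Q : ℕ → ℕ → Prop) : ℕ → ℕ → Prop :=
  fun i j => concatPart m P Q i j ∨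
    (P i 0 ∧ shiftPart m Q j m) ∨
    (shiftPart m Q i m ∧ P j 0)

namespace PBTree

/-- The over-grafting `σ / τ`: graft `σ` as the left child of the leftmost internal
vertex of `τ` (with `σ / | = σ`). -/
def over_ : PBTree → PBTree → PBTree
  | σ, .leaf => σ
  | σ, .node l r => .node (over_ σ l) r

/-- The under-grafting `σ \ τ`: graft `τ` as the right child of the rightmost internal
vertex of `σ` (with `| \ τ = τ`). -/
def under : PBTree → PBTree → PBTree
  | .leaf, τ => τ
  | .node l r, τ => .node l (under r τ)

end PBTree

/-- The unique isomorphism of Catalan pairs `φ : Y → NCP`, determined by `φ(|) = ∅` and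
`φ(σ ∨ τ) = φ(σ) * (| ⊔̲ φ(τ))`. -/
def phi : PBTree → (ℕ → ℕ → Prop)
  | .leaf => emptyPart
  | .node σ τ => concatPart σ.size (phi σ) (rmergePart 1 τ.size onePart (phi τ))

/-!
Both identities are proved by induction on the tree that is grafted into. Over-grafting reduces to
associativity of concatenation. Under-grafting reduces to associativity of right-merging together
with the exchange law `(P * X) ⊔̲ R = P * (X ⊔̲ R)` for nonempty `X`; both hold for relations that
live on their intervals and are reflexive there, since on either side of the associativity law the
merged last block is the union of the last blocks of `P`, `Q` and `R`.
-/

namespace PBTree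

theorem size_over_ (σ τ : PBTree) : (σ.over_ τ).size = σ.size + τ.size := by
  induction τ with
  | leaf => rfl
  | node l r ih => simp only [over_, size]; omega

theorem size_under (σ τ : PBTree) : (σ.under τ).size = σ.size + τ.size := by
  induction σ with
  | leaf => simp [under, size]
  | node l r _ ih => simp only [under, size]; omega

end PBTree

/-- The part of being a partition of `[n]` that the grafting identities use. -/
structure IsReflOn (n : ℕ) (r : ℕ → ℕ → Prop) : Prop where
  lt : ∀ {i j}, r i j → i < n ∧ j < n
  refl : ∀ i < n, r i i

theorem isReflOn_emptyPart : IsReflOn 0 emptyPart := ⟨False.elim, by omega⟩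

theorem isReflOn_onePart : IsReflOn 1 onePart := ⟨by simp [onePart], by simp [onePart]⟩

theorem IsReflOn.eq_emptyPart {r : ℕ → ℕ → Prop} (hr : IsReflOn 0 r) : r = emptyPart := by
  funext i j
  simpa [emptyPart] using fun h => (hr.lt h).1

theorem IsReflOn.concatPart {m n : ℕ} {P Q : ℕ → ℕ → Prop} (hP : IsReflOn m P)
    (hQ : IsReflOn n Q) : IsReflOn (m + n) (concatPart m P Q) where
  lt := by
    rintro i j (h | ⟨hi, hj, h⟩)
    · have := hP.lt h; omega
    · have := hQ.lt h; omega
  refl i hi := by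
    by_cases him : i < m
    · exact Or.inl (hP.refl i him)
    · exact Or.inr ⟨by omega, by omega, hQ.refl _ (by omega)⟩

theorem IsReflOn.rmergePart {m n : ℕ} {P Q : ℕ → ℕ → Prop} (hP : IsReflOn m P)
    (hQ : IsReflOn n Q) : IsReflOn (m + n) (rmergePart m n P Q) where
  lt := by
    rintro i j (h | ⟨hi, -, hj, h⟩ | ⟨⟨hi, -, h⟩, hj⟩)
    · exact (hP.concatPart hQ).lt h
    · have := (hP.lt hi).1; have := (hQ.lt h).1; omega
    · have := (hP.lt hj).1; have := (hQ.lt h).1; omega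
  refl i hi := Or.inl ((hP.concatPart hQ).refl i hi)

theorem isReflOn_phi (σ : PBTree) : IsReflOn σ.size (phi σ) := by
  induction σ with
  | leaf => exact isReflOn_emptyPart
  | node l r hl hr =>
    have := hl.concatPart (isReflOn_onePart.rmergePart hr)
    rwa [← add_assoc, add_right_comm] at this

theorem concatPart_emptyPart (m : ℕ) (P : ℕ → ℕ → Prop) : concatPart m P emptyPart = P := by
  funext i j
  simp [concatPart, shiftPart, emptyPart]

theorem concatPart_assoc (m n : ℕ) (P Q R : ℕ → ℕ → Prop) :
    concatPart (m + n) (concatPart m P Q) R = concatPart m P (concatPart n Q R) := by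
  funext i j
  simp only [concatPart, shiftPart, eq_iff_iff, Nat.sub_sub]
  grind

theorem emptyPart_rmergePart (n : ℕ) (R : ℕ → ℕ → Prop) : rmergePart 0 n emptyPart R = R := by
  funext i j
  simp [rmergePart, concatPart, shiftPart, emptyPart]

theorem rmergePart_emptyPart (m : ℕ) (P : ℕ → ℕ → Prop) : rmergePart m 0 P emptyPart = P := by
  funext i j
  simp [rmergePart, concatPart, shiftPart, emptyPart]

theorem rmergePart_assoc {m k n : ℕ} {P Q R : ℕ → ℕ → Prop}
    (hP : ∀ i j, P i j → i < m ∧ j < m) (hQ : IsReflOn k Q) (hR : IsReflOn n R) :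
    rmergePart (m + k) n (rmergePart m k P Q) R = rmergePart m (k + n) P (rmergePart k n Q R) := by
  rcases Nat.eq_zero_or_pos k with rfl | hk
  · rw [hQ.eq_emptyPart, rmergePart_emptyPart, emptyPart_rmergePart, Nat.add_zero, Nat.zero_add]
  rcases Nat.eq_zero_or_pos n with rfl | hn
  · rw [hR.eq_emptyPart, rmergePart_emptyPart, rmergePart_emptyPart, Nat.add_zero]
  have hQ_lt : ∀ i j, Q i j → i < k ∧ j < k := fun _ _ => hQ.lt
  have hR_lt : ∀ i j, R i j → i < n ∧ j < n := fun _ _ => hR.lt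
  -- the last elements `k - 1` and `n - 1` lie in the last blocks that get merged
  have hQ_last : Q (k - 1) (k - 1) := hQ.refl _ (by omega)
  have hR_last : R (n - 1) (n - 1) := hR.refl _ (by omega)
  have e₁ : m + k - 1 - m = k - 1 := by omega
  have e₂ : m + k + n - 1 - (m + k) = n - 1 := by omega
  have e₃ : k + n - 1 - k = n - 1 := by omega
  have e₄ : m + (k + n) - 1 - m = k + n - 1 := by omega
  funext i j
  simp only [rmergePart, concatPart, shiftPart, eq_iff_iff, e₁, e₂, e₃, e₄, hQ_last, hR_last]
  grind (splits := 20)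

theorem rmergePart_concatPart {m k n : ℕ} {P X R : ℕ → ℕ → Prop}
    (hP : ∀ i j, P i j → i < m ∧ j < m) (hk : 1 ≤ k) :
    rmergePart (m + k) n (concatPart m P X) R = concatPart m P (rmergePart k n X R) := by
  have e₁ : m + k - 1 - m = k - 1 := by omega
  have e₂ : m + k + n - 1 - (m + k) = n - 1 := by omega
  have e₃ : k + n - 1 - k = n - 1 := by omega
  funext i j
  simp only [rmergePart, concatPart, shiftPart, eq_iff_iff, e₁, e₂, e₃]
  grind

theorem phi_over_ (σ τ : PBTree) : phi (σ.over_ τ) = concatPart σ.size (phi σ) (phi τ) := by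
  induction τ with
  | leaf => exact (concatPart_emptyPart _ _).symm
  | node l r ih => simp only [PBTree.over_, phi, PBTree.size_over_, ih, concatPart_assoc]

theorem phi_under (σ τ : PBTree) :
    phi (σ.under τ) = rmergePart σ.size τ.size (phi σ) (phi τ) := by
  induction σ with
  | leaf => exact (emptyPart_rmergePart _ _).symm
  | node l r _ ih =>
    calc phi ((l.node r).under τ)
        = concatPart l.size (phi l)
            (rmergePart 1 (r.size + τ.size) onePart (rmergePart r.size τ.size (phi r) (phi τ))) := by
          simp only [PBTree.under, phi, PBTree.size_under, ih]
      _ = concatPart l.size (phi l)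
            (rmergePart (1 + r.size) τ.size (rmergePart 1 r.size onePart (phi r)) (phi τ)) := by
          rw [rmergePart_assoc (fun _ _ => isReflOn_onePart.lt) (isReflOn_phi r) (isReflOn_phi τ)]
      _ = rmergePart (l.size + (1 + r.size)) τ.size (phi (l.node r)) (phi τ) :=
          (rmergePart_concatPart (fun _ _ => (isReflOn_phi l).lt) (by omega)).symm
      _ = rmergePart (l.node r).size τ.size (phi (l.node r)) (phi τ) := by
          rw [PBTree.size, add_comm 1, add_assoc]

/-- `φ` turns over- and under-grafting of planar binary trees into
concatenation and right-merging of noncrossing partitions. -/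
theorem phi_over_under (σ τ : PBTree) :
    phi (σ.over_ τ) = concatPart σ.size (phi σ) (phi τ) ∧
    phi (σ.under τ) = rmergePart σ.size τ.size (phi σ) (phi τ) :=
  ⟨phi_over_ σ τ, phi_under σ τ⟩
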